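/- arXiv:2107.03018 — 3 statements merged into one kernel-verified Lean document; each statement's English description precedes it below -/
import Mathlib

section
/- In a directed acyclic graph G, if X → Z ← Y is a convergence connection with X and Y non-adjacent, then there exists a set W ⊆ V \ {X, Y, Z} of vertices such that X and Y are d-separated given W in G. -/
structure DAG (V : Type) where
  E : V → V → Prop
  acyclic : Irreflexive (Relation.TransGen E)

namespace DAG

variable {V : Type}

/-- Two vertices are adjacent if there is an edge in either direction. -/
def Adj (G : DAG V) (a b : V) : Prop := G.E a b ∨ G.E b a

/-- `b` is a descendant of `a` (including `a` itself). -/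
def Desc (G : DAG V) (a b : V) : Prop := Relation.ReflTransGen G.E a b

/-- A (undirected) path from `x` to `y`: a nodup list of vertices, consecutive
vertices adjacent. -/
def IsPath (G : DAG V) (p : List V) (x y : V) : Prop :=
  p.Nodup ∧ p.head? = some x ∧ p.getLast? = some y ∧ List.Chain' G.Adj p

/-- `w` is an interior vertex of the path `p`. -/
def Interior (p : List V) (w : V) : Prop := ∃ a b : V, [a, w, b] <:+: p

/-- `w` is a collider on the path `p`: both path edges point into `w`. -/
def Collider (G : DAG V) (p : List V) (w : V) : Prop :=
  ∃ a b : V, [a, w, b] <:+: p ∧ G.E a w ∧ G.E b w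

/-- A path is blocked given `Z` if it contains a collider none of whose
descendants is in `Z`, or a non-collider interior vertex in `Z`. -/
def Blocked (G : DAG V) (Z : Set V) (p : List V) : Prop :=
  ∃ w : V, Interior p w ∧
    ((Collider G p w ∧ ∀ d : V, G.Desc w d → d ∉ Z) ∨ (¬ Collider G p w ∧ w ∈ Z))

/-- `X` and `Y` are d-separated given `Z` iff every path between them is blocked. -/
def DSep (G : DAG V) (X Y : V) (Z : Set V) : Prop :=
  ∀ p : List V, G.IsPath p X Y → G.Blocked Z p

/-- Markov equivalence: identical d-separation statements. -/
def MarkovEquiv (G₁ G₂ : DAG V) : Prop :=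
  ∀ (X Y : V) (Z : Set V), X ≠ Y → X ∉ Z → Y ∉ Z →
    (DSep G₁ X Y Z ↔ DSep G₂ X Y Z)

/-- `G` is an I-map of the (abstract) conditional-independence relation `I`. -/
def IMap (G : DAG V) (I : V → V → Set V → Prop) : Prop :=
  ∀ (X Y : V) (Z : Set V), X ≠ Y → X ∉ Z → Y ∉ Z → DSep G X Y Z → I X Y Z

/-- `G` is a perfect map of `I`: d-separations coincide with independences. -/
def PerfectMap (G : DAG V) (I : V → V → Set V → Prop) : Prop :=
  ∀ (X Y : V) (Z : Set V), X ≠ Y → X ∉ Z → Y ∉ Z → (DSep G X Y Z ↔ I X Y Z)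

/-- Markov blanket of `X₀`: parents, children, and parents of children. -/
def MarkovBlanket (G : DAG V) (X₀ : V) : Set V :=
  {Y | Y ≠ X₀ ∧ (G.E Y X₀ ∨ G.E X₀ Y ∨ ∃ C : V, G.E X₀ C ∧ G.E Y C)}

end DAG

namespace DAGaux

open Relation List

variable {V : Type}

lemma get_mid {s t : List V} {a w b : V} {p : List V} (e : s ++ [a, w, b] ++ t = p)
    (h : s.length + 1 < p.length) : p[s.length + 1] = w := by
  subst e
  simp [List.getElem_append_right, List.append_assoc]

lemma infix_unique {p : List V} (hnd : p.Nodup) {a₁ w b₁ a₂ b₂ : V}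
    (h₁ : [a₁, w, b₁] <:+: p) (h₂ : [a₂, w, b₂] <:+: p) : a₁ = a₂ ∧ b₁ = b₂ := by
  obtain ⟨s₁, t₁, e₁⟩ := h₁
  obtain ⟨s₂, t₂, e₂⟩ := h₂
  have hl₁ : s₁.length + 1 < p.length := by rw [← e₁]; simp
  have hl₂ : s₂.length + 1 < p.length := by rw [← e₂]; simp
  have hij : s₁.length + 1 = s₂.length + 1 :=
    (List.Nodup.getElem_inj_iff hnd).mp ((get_mid e₁ hl₁).trans (get_mid e₂ hl₂).symm)
  have hlen : s₁.length = s₂.length := by omega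
  have e : s₁ ++ ([a₁, w, b₁] ++ t₁) = s₂ ++ ([a₂, w, b₂] ++ t₂) := by
    rw [← List.append_assoc, ← List.append_assoc, e₁, e₂]
  obtain ⟨rfl, e'⟩ := List.append_inj e hlen
  simp at e'
  exact ⟨e'.1, e'.2.1⟩

lemma infix_rev {p : List V} {a w b : V} :
    [a, w, b] <:+: p.reverse ↔ [b, w, a] <:+: p := by
  constructor
  · intro h
    have := List.IsInfix.reverse h
    simpa using this
  · intro h
    have := List.IsInfix.reverse h
    simpa using this

lemma collider_rev (G : DAG V) {p : List V} {w : V} :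
    G.Collider p.reverse w ↔ G.Collider p w := by
  constructor
  · rintro ⟨a, b, hi, ha, hb⟩
    exact ⟨b, a, infix_rev.mp hi, hb, ha⟩
  · rintro ⟨a, b, hi, ha, hb⟩
    exact ⟨b, a, infix_rev.mpr hi, hb, ha⟩

lemma interior_rev {p : List V} {w : V} :
    DAG.Interior p.reverse w ↔ DAG.Interior p w := by
  constructor
  · rintro ⟨a, b, hi⟩; exact ⟨b, a, infix_rev.mp hi⟩
  · rintro ⟨a, b, hi⟩; exact ⟨b, a, infix_rev.mpr hi⟩

lemma blocked_rev (G : DAG V) {W : Set V} {p : List V}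
    (h : G.Blocked W p.reverse) : G.Blocked W p := by
  obtain ⟨w, hi, hc⟩ := h
  refine ⟨w, interior_rev.mp hi, ?_⟩
  rcases hc with ⟨hc, hd⟩ | ⟨hc, hw⟩
  · exact Or.inl ⟨(collider_rev G).mp hc, hd⟩
  · exact Or.inr ⟨fun c => hc ((collider_rev G).mpr c), hw⟩

lemma isPath_rev (G : DAG V) {p : List V} {x y : V} (h : G.IsPath p x y) :
    G.IsPath p.reverse y x := by
  obtain ⟨hnd, hh, hl, hc⟩ := h
  refine ⟨(List.nodup_reverse).mpr hnd, ?_, ?_, ?_⟩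
  · rwa [List.head?_reverse]
  · rwa [List.getLast?_reverse]
  · unfold List.Chain' at hc ⊢
    rw [List.isChain_reverse]
    exact hc.imp fun a b hab => hab.symm

lemma no_desc_parent (G : DAG V) {A w : V} (hAw : Relation.ReflTransGen G.E A w) :
    ∀ d : V, G.Desc w d → d ∉ {v | G.E v A} := by
  intro d hwd hd
  exact G.acyclic A (Relation.TransGen.tail' (hAw.trans hwd) hd)

/-- Walking along a directed sub-path away from `A`: either we hit a collider
(blocked since its descendants can't be parents of `A`), or we reach the end
`B`, contradicting that `B` is not a descendant of `A`. -/
lemma walk (G : DAG V) (A B : V) (hdesc : ¬ Relation.ReflTransGen G.E A B)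
    {p : List V} (hlast : p.getLast? = some B) :
    ∀ (s : List V) (a w : V), G.E a w → Relation.ReflTransGen G.E A a →
      List.Chain' G.Adj (a :: w :: s) → (a :: w :: s) <:+ p →
      G.Blocked {v | G.E v A} p := by
  intro s
  induction s with
  | nil =>
    intro a w haw hAa _ hsuf
    exfalso
    obtain ⟨t, rfl⟩ := hsuf
    simp at hlast
    exact hdesc (hAa.trans (Relation.ReflTransGen.single (hlast ▸ haw)))
  | cons b s' ih =>
    intro a w haw hAa hch hsuf
    have hinf : [a, w, b] <:+: p :=
      List.IsInfix.trans ⟨[], s', by simp⟩ hsuf.isInfix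
    have hwb : G.Adj w b := (List.isChain_cons_cons.mp (List.isChain_cons_cons.mp hch).2).1
    rcases hwb with hwb | hbw
    · -- continue walking
      have hsuf' : (w :: b :: s') <:+ p := (List.suffix_cons a _).trans hsuf
      exact ih w b hwb (hAa.tail haw) (List.isChain_cons_cons.mp hch).2 hsuf'
    · -- collider at w
      refine ⟨w, ⟨a, b, hinf⟩, Or.inl ⟨⟨a, b, hinf, haw, hbw⟩, ?_⟩⟩
      exact no_desc_parent G (hAa.tail haw)

/-- Key lemma: if `A` and `B` are non-adjacent and `B` is not a descendant of
`A`, then every path from `A` to `B` is blocked by the parents of `A`. -/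
lemma key (G : DAG V) (A B : V) (hAB : ¬ G.Adj A B)
    (hdesc : ¬ Relation.ReflTransGen G.E A B) {p : List V}
    (hp : G.IsPath p A B) : G.Blocked {v | G.E v A} p := by
  obtain ⟨hnd, hh, hl, hc⟩ := hp
  -- p = A :: u :: s
  obtain ⟨p', rfl⟩ : ∃ p', p = A :: p' := by
    cases p with
    | nil => simp at hh
    | cons x q => simp at hh; exact ⟨q, by rw [hh]⟩
  cases p' with
  | nil =>
    simp at hl
    exact absurd (hl ▸ Relation.ReflTransGen.refl) hdesc
  | cons u s =>
    have hAu : G.Adj A u := (List.isChain_cons_cons.mp hc).1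
    cases s with
    | nil =>
      simp at hl
      exact absurd (hl ▸ hAu) hAB
    | cons b s' =>
      have hinf : [A, u, b] <:+: (A :: u :: b :: s') := ⟨[], s', by simp⟩
      rcases hAu with hAu | huA
      · -- walk from A
        exact walk G A B hdesc hl (b :: s') A u hAu Relation.ReflTransGen.refl hc
          (List.suffix_refl _)
      · -- u is a parent of A, non-collider
        refine ⟨u, ⟨A, b, hinf⟩, Or.inr ⟨?_, huA⟩⟩
        rintro ⟨a', b', hinf', ha', hb'⟩
        obtain ⟨h1, h2⟩ := infix_unique hnd hinf' hinf
        rw [h1] at ha'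
        exact G.acyclic A (Relation.TransGen.head ha' (Relation.TransGen.single huA))


end DAGaux

/-- Theorem 1 (second half): in a convergence connection `X → Z ← Y` with
`X, Y` non-adjacent, there exists a conditioning set `W ⊆ V \ {X, Y, Z}`
d-separating `X` and `Y`. -/
theorem stmt4 {V : Type} (G : DAG V) (X Y Z : V)
    (hXZ : G.E X Z) (hYZ : G.E Y Z) (hna : ¬ G.Adj X Y) (hne : X ≠ Y) :
    ∃ W : Set V, X ∉ W ∧ Y ∉ W ∧ Z ∉ W ∧ G.DSep X Y W := by
  have hcases : ¬ Relation.ReflTransGen G.E X Y ∨ ¬ Relation.ReflTransGen G.E Y X := by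
    by_contra h
    push_neg at h
    obtain ⟨h1, h2⟩ := h
    have ht : Relation.TransGen G.E X Y := by
      rcases (Relation.reflTransGen_iff_eq_or_transGen.mp h1) with h | h
      · exact absurd h.symm hne
      · exact h
    exact G.acyclic X (Relation.TransGen.trans_left ht h2)
  rcases hcases with hd | hd
  · -- condition on the parents of X
    refine ⟨{v | G.E v X}, ?_, ?_, ?_, ?_⟩
    · exact fun h => G.acyclic X (Relation.TransGen.single h)
    · exact fun h => hna (Or.inr h)
    · exact fun h => G.acyclic X (Relation.TransGen.head hXZ (Relation.TransGen.single h))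
    · intro p hp
      exact DAGaux.key G X Y hna hd hp
  · -- condition on the parents of Y
    refine ⟨{v | G.E v Y}, ?_, ?_, ?_, ?_⟩
    · exact fun h => hna (Or.inl h)
    · exact fun h => G.acyclic Y (Relation.TransGen.single h)
    · exact fun h => G.acyclic Y (Relation.TransGen.head hYZ (Relation.TransGen.single h))
    · intro p hp
      refine DAGaux.blocked_rev G ?_
      exact DAGaux.key G Y X (fun h => hna (h.elim Or.inr Or.inl)) hd
        (DAGaux.isPath_rev G hp)
end

section
/- If two DAGs G₁ and G₂ on the same vertex set are Markov equivalent (represent exactly the same d-separations), then they have the same skeleton: for all distinct vertices X, Y, there is an edge between X and Y in G₁ (in some direction) if and only if there is an edge between X and Y in G₂. -/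
namespace DAG

variable {V : Type}

lemma not_dsep_of_adj (G : DAG V) {X Y : V} (hXY : X ≠ Y) (hadj : G.Adj X Y)
    (Z : Set V) : ¬ G.DSep X Y Z := by
  intro hd
  have hp : G.IsPath [X, Y] X Y := by
    refine ⟨by simp [hXY], rfl, by simp, ?_⟩
    exact List.isChain_pair.mpr hadj
  obtain ⟨w, ⟨a, b, hinf⟩, -⟩ := hd _ hp
  have := hinf.length_le
  simp at this

lemma walk_blocked (G : DAG V) {X Y : V} (hnd : ¬ Relation.TransGen G.E X Y)
    (p : List V) (hlast : p.getLast? = some Y) (hch : List.Chain' G.Adj p) :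
    ∀ (q : List V) (a b : V) (s : List V), p = s ++ a :: b :: q → G.E a b →
      Relation.TransGen G.E X b → G.Blocked {z | G.E z X} p := by
  intro q
  induction q with
  | nil =>
    intro a b s hp hab hXb
    exfalso
    apply hnd
    have : p.getLast? = some b := by
      rw [hp]; simp [List.getLast?_append]
    rw [this] at hlast
    obtain rfl : b = Y := by simpa using hlast
    exact hXb
  | cons c q' ih =>
    intro a b s hp hab hXb
    have hinfix : [b, c] <:+: p := ⟨s ++ [a], q', by simp [hp]⟩
    have hadj : G.Adj b c := by
      have := hch.infix hinfix
      simpa [List.isChain_cons_cons] using this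
    rcases hadj with hbc | hcb
    · exact ih b c (s ++ [a]) (by simp [hp]) hbc (hXb.tail hbc)
    · have hinf3 : [a, b, c] <:+: p := ⟨s, q', by simp [hp]⟩
      refine ⟨b, ⟨a, c, hinf3⟩, Or.inl ⟨⟨a, c, hinf3, hab, hcb⟩, ?_⟩⟩
      intro d hbd hdZ
      have h1 : Relation.TransGen G.E X d := Relation.TransGen.trans_left hXb hbd
      exact G.acyclic X (h1.tail hdZ)

lemma dsep_parents (G : DAG V) {X Y : V} (hXY : X ≠ Y) (hnadj : ¬ G.Adj X Y)
    (hnd : ¬ Relation.TransGen G.E X Y) : G.DSep X Y {z | G.E z X} := by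
  intro p hp
  obtain ⟨hnodup, hhead, hlast, hch⟩ := hp
  rcases p with _ | ⟨x, rest⟩
  · simp at hhead
  have hx : X = x := by simpa using hhead.symm
  subst hx
  rcases rest with _ | ⟨w, r⟩
  · simp at hlast; exact absurd hlast hXY
  have hadjXw : G.Adj X w := by
    have := hch.infix (⟨[], r, by simp⟩ : [X, w] <:+: X :: w :: r)
    simpa [List.isChain_cons_cons] using this
  rcases hadjXw with hXw | hwX
  · exact walk_blocked G hnd _ hlast hch r X w [] rfl hXw (.single hXw)
  rcases r with _ | ⟨b, r'⟩
  · exfalso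
    have : w = Y := by simpa using hlast
    subst this
    exact hnadj (Or.inr hwX)
  refine ⟨w, ⟨X, b, ⟨[], r', by simp⟩⟩, Or.inr ⟨?_, hwX⟩⟩
  rintro ⟨a, b', ⟨s, t, hst⟩, haw, hb'w⟩
  simp only [List.nodup_cons, List.mem_cons] at hnodup
  rcases s with _ | ⟨x, _ | ⟨y, s'⟩⟩
  · simp at hst
    rw [hst.1] at haw
    exact G.acyclic X ((Relation.TransGen.single haw).tail hwX)
  · simp at hst
    exact hnodup.2.1 (Or.inl hst.2.2.1)
  · simp at hst
    apply hnodup.2.1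
    have : w ∈ b :: r' := by rw [← hst.2.2]; simp
    simpa using this

end DAG

/-- Markov equivalent DAGs have the same skeleton. -/
theorem stmt7 {V : Type} (G₁ G₂ : DAG V) (h : G₁.MarkovEquiv G₂) :
    ∀ X Y : V, X ≠ Y → (G₁.Adj X Y ↔ G₂.Adj X Y) := by
  have key : ∀ (A B : DAG V), A.MarkovEquiv B → ∀ X Y : V, X ≠ Y → A.Adj X Y → B.Adj X Y := by
    intro A B hAB X Y hXY h1
    by_contra h2
    rcases Classical.em (Relation.TransGen B.E X Y) with htg | htg
    · have htg' : ¬ Relation.TransGen B.E Y X := fun h' => B.acyclic X (htg.trans h')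
      have hd := B.dsep_parents hXY.symm (fun h' => h2 h'.symm) htg'
      have hYZ : Y ∉ {z | B.E z Y} := fun h' => B.acyclic Y (.single h')
      have hXZ : X ∉ {z | B.E z Y} := fun h' => h2 (Or.inl h')
      exact A.not_dsep_of_adj hXY.symm h1.symm _ ((hAB Y X _ hXY.symm hYZ hXZ).mpr hd)
    · have hd := B.dsep_parents hXY h2 htg
      have hXZ : X ∉ {z | B.E z X} := fun h' => B.acyclic X (.single h')
      have hYZ : Y ∉ {z | B.E z X} := fun h' => h2 (Or.inr h')
      exact A.not_dsep_of_adj hXY h1 _ ((hAB X Y _ hXY hXZ hYZ).mpr hd)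
  intro X Y hXY
  exact ⟨key G₁ G₂ h X Y hXY,
    key G₂ G₁ (fun a b Z hab ha hb => (h a b Z hab ha hb).symm) X Y hXY⟩
end

section
/- Let G* be a perfect map of distribution P* (d-separations in G* coincide exactly with conditional independences in P*), and let G be any DAG that is an I-map of P*. If G* contains a convergence connection X → X₀ ← Y with X, Y non-adjacent in G*, and in G the vertex X₀ is a parent of both X and Y (divergence connection X ← X₀ → Y), then X and Y must be adjacent in G. -/
-- infix of a 3-element list
lemma infix_three {V : Type} {a w b x y z : V} (h : [a,w,b] <:+: [x,y,z]) :
    a = x ∧ w = y ∧ b = z := by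
  rcases h with ⟨s, t, hst⟩
  have hl := congrArg List.length hst
  simp at hl
  have hs : s = [] := List.eq_nil_of_length_eq_zero (by omega)
  have ht : t = [] := List.eq_nil_of_length_eq_zero (by omega)
  subst hs; subst ht
  simpa using hst

-- in a nodup list x::w::r, any infix [a,w,b] has a = x
lemma infix_second {V : Type} {x w a b : V} {r : List V}
    (hnd : (x :: w :: r).Nodup) (h : [a, w, b] <:+: (x :: w :: r)) : a = x := by
  rcases h with ⟨s, t, hst⟩
  match s with
  | [] =>
    simp only [List.nil_append, List.cons_append] at hst
    injection hst
  | c :: s' =>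
    exfalso
    have hwr : w ∈ r := by
      cases s' with
      | nil =>
        simp only [List.cons_append, List.nil_append, List.cons.injEq] at hst
        obtain ⟨_, _, hr⟩ := hst
        rw [← hr]
        simp
      | cons d s'' =>
        simp only [List.cons_append, List.cons.injEq] at hst
        obtain ⟨_, _, hr⟩ := hst
        rw [← hr]
        simp
    have : w ∉ r := (List.nodup_cons.mp (List.nodup_cons.mp hnd).2).1
    exact this hwr

lemma chase {V : Type} (G : DAG V) {X Y : V} (hnd : ¬ Relation.TransGen G.E X Y) :
    ∀ (l : List V) (a b : V), G.E a b → Relation.TransGen G.E X b →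
      List.Chain' G.Adj (a :: b :: l) → (a :: b :: l).getLast? = some Y →
      ∃ w c d, [c, w, d] <:+: (a :: b :: l) ∧ G.E c w ∧ G.E d w ∧
        Relation.TransGen G.E X w := by
  intro l
  induction l with
  | nil =>
    intro a b hab hXb _ hlast
    simp only [List.getLast?_cons_cons, List.getLast?_singleton, Option.some.injEq] at hlast
    exact absurd (hlast ▸ hXb) hnd
  | cons c l ih =>
    intro a b hab hXb hch hlast
    rw [List.Chain', List.isChain_cons_cons] at hch
    have hbc : G.Adj b c := (List.isChain_cons_cons.mp hch.2).1
    rcases hbc with h | h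
    · obtain ⟨w, c', d', hinf, h1, h2, h3⟩ :=
        ih b c h (hXb.tail h) hch.2 (by rw [List.getLast?_cons_cons] at hlast; exact hlast)
      exact ⟨w, c', d', hinf.trans (List.suffix_cons a _).isInfix, h1, h2, h3⟩
    · exact ⟨b, a, c, ⟨[], l, rfl⟩, hab, h, hXb⟩

lemma key {V : Type} (Gstar G : DAG V) (I : V → V → Set V → Prop)
    (hperf : Gstar.PerfectMap I) (himap : G.IMap I)
    (X Y X₀ : V) (hXY : X ≠ Y) (hX : X ≠ X₀) (hY : Y ≠ X₀)
    (h₁ : Gstar.E X X₀) (h₂ : Gstar.E Y X₀)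
    (h₃ : G.E X₀ X) (h₄ : G.E X₀ Y)
    (hnadj : ¬ G.Adj X Y) (hnd : ¬ Relation.TransGen G.E X Y) : False := by
  set Z : Set V := {w | G.E w X} with hZ
  have hXZ : X ∉ Z := fun h => G.acyclic X (.single h)
  have hYZ : Y ∉ Z := fun h => hnadj (Or.inr h)
  have hds : G.DSep X Y Z := by
    rintro p ⟨hnodup, hhead, hlast, hch⟩
    rcases p with _ | ⟨x, q⟩
    · simp at hhead
    obtain rfl : X = x := by simpa using hhead.symm
    rcases q with _ | ⟨v, q'⟩
    · exact absurd (by simpa using hlast) hXY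
    rw [List.Chain', List.isChain_cons_cons] at hch
    rcases hch.1 with hXv | hvX
    · obtain ⟨w, c, d, hinf, hcw, hdw, hXw⟩ :=
        chase G hnd q' X v hXv (.single hXv) (List.isChain_cons_cons.mpr hch) hlast
      exact ⟨w, ⟨c, d, hinf⟩, Or.inl ⟨⟨c, d, hinf, hcw, hdw⟩,
        fun d' hdesc hd'Z =>
          G.acyclic X (Relation.TransGen.tail' (hXw.to_reflTransGen.trans hdesc) hd'Z)⟩⟩
    · rcases q' with _ | ⟨u, q''⟩
      · exact absurd (Or.inr (show G.E Y X from (by simpa using hlast : v = Y) ▸ hvX)) hnadj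
      refine ⟨v, ⟨X, u, ⟨[], q'', rfl⟩⟩, Or.inr ⟨?_, hvX⟩⟩
      rintro ⟨a, b, hinf, haw, hbw⟩
      have ha := infix_second hnodup hinf
      exact G.acyclic X ((Relation.TransGen.single (ha ▸ haw)).tail hvX)
  have hI : I X Y Z := himap X Y Z hXY hXZ hYZ hds
  have hdstar : Gstar.DSep X Y Z := (hperf X Y Z hXY hXZ hYZ).mpr hI
  have hpath : Gstar.IsPath [X, X₀, Y] X Y := by
    refine ⟨by simp [hX, hXY, Ne.symm hY], rfl, rfl, ?_⟩
    simp [List.Chain', List.isChain_cons_cons, DAG.Adj]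
    exact ⟨Or.inl h₁, Or.inr h₂⟩
  obtain ⟨w, ⟨a, b, hinf⟩, hb⟩ := hdstar _ hpath
  obtain ⟨ha, hw, hb'⟩ := infix_three hinf
  rcases hb with ⟨_, hall⟩ | ⟨hnc, _⟩
  · exact hall w Relation.ReflTransGen.refl (show w ∈ Z by rw [hw]; exact h₃)
  · exact hnc ⟨a, b, hinf, by rw [ha, hw]; exact h₁, by rw [hb', hw]; exact h₂⟩


/-- Lemma 3: if the perfect map `G*` has a v-structure `X → X₀ ← Y` with
`X, Y` non-adjacent, and an I-map `G` has the divergence connection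
`X ← X₀ → Y`, then `X` and `Y` are adjacent in `G`. -/
theorem stmt11 {V : Type} (Gstar G : DAG V) (I : V → V → Set V → Prop)
    (hperf : Gstar.PerfectMap I) (himap : G.IMap I)
    (X Y X₀ : V) (hXY : X ≠ Y) (hX : X ≠ X₀) (hY : Y ≠ X₀)
    (h₁ : Gstar.E X X₀) (h₂ : Gstar.E Y X₀) (hna : ¬ Gstar.Adj X Y)
    (h₃ : G.E X₀ X) (h₄ : G.E X₀ Y) : G.Adj X Y := by
  by_contra hnadj
  have hsym : ¬ G.Adj Y X := fun h => hnadj h.symm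
  rcases Classical.em (Relation.TransGen G.E X Y) with hxy | hxy
  · have hyx : ¬ Relation.TransGen G.E Y X := fun h => G.acyclic X (hxy.trans h)
    exact key Gstar G I hperf himap Y X X₀ hXY.symm hY hX h₂ h₁ h₄ h₃ hsym hyx
  · exact key Gstar G I hperf himap X Y X₀ hXY hX hY h₁ h₂ h₃ h₄ hnadj hxy
end
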